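/- For every rotation matrix R ∈ SO(3), ‖ψ(R)‖² = 4|R|_I²(1 − |R|_I²); consequently ‖ψ(R)‖ ≤ 2|R|_I. -/

import Mathlib

open Matrix

/-- `R ∈ SO(3)`: `R Rᵀ = I` and `det R = 1`. -/
def IsSO3 (R : Matrix (Fin 3) (Fin 3) ℝ) : Prop := R * Rᵀ = 1 ∧ R.det = 1

/-- `ψ(A) = vex(P_a(A))` where `P_a(A) = (A - Aᵀ)/2`. -/
noncomputable def psi (A : Matrix (Fin 3) (Fin 3) ℝ) : Fin 3 → ℝ :=
  ![(A 2 1 - A 1 2)/2, (A 0 2 - A 2 0)/2, (A 1 0 - A 0 1)/2]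

/-- Squared normalized Euclidean distance on SO(3): `|R|_I² = (1/4) tr(I - R)`. -/
noncomputable def distI2 (R : Matrix (Fin 3) (Fin 3) ℝ) : ℝ :=
  (1/4) * Matrix.trace (1 - R)

/-- Euclidean norm on `ℝ³`. -/
noncomputable def vnorm (x : Fin 3 → ℝ) : ℝ := Real.sqrt (x ⬝ᵥ x)

/-! For `R ∈ SO(3)` with `t = tr R`, the identity `4 ‖ψ(A)‖² = tr (A Aᵀ) - tr (A²)` (the squared
Frobenius norm of `A - Aᵀ`, halved) and the Cayley–Hamilton relation
`tr (A²) = (tr A)² - 2 tr (adj A)` combine with `R Rᵀ = 1` and `adj R = Rᵀ` to give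
`4 ‖ψ(R)‖² = 3 - t² + 2t = (3 - t)(1 + t)`, which is `16 |R|_I² (1 - |R|_I²)` since
`|R|_I² = (3 - t)/4`. The bound follows from `1 - |R|_I² ≤ 1`. -/

theorem four_mul_psi_dotProduct_self (A : Matrix (Fin 3) (Fin 3) ℝ) :
    4 * (psi A ⬝ᵥ psi A) = trace (A * Aᵀ) - trace (A * A) := by
  simp only [psi, dotProduct, Fin.sum_univ_three, trace_fin_three, mul_apply, transpose_apply,
    cons_val_zero, cons_val_one, cons_val_two, head_cons, tail_cons]
  ring

theorem Matrix.trace_mul_self_fin_three {α : Type*} [CommRing α] (A : Matrix (Fin 3) (Fin 3) α) :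
    trace (A * A) = trace A ^ 2 - 2 * trace (adjugate A) := by
  simp only [adjugate_fin_three, trace_fin_three, mul_apply, Fin.sum_univ_three, of_apply,
    cons_val_zero, cons_val_one, cons_val_two, head_cons, tail_cons]
  ring

theorem Matrix.adjugate_eq_transpose_of_mul_transpose_eq_one {n α : Type*} [Fintype n]
    [DecidableEq n] [CommRing α] {A : Matrix n n α} (hA : A * Aᵀ = 1) (hdet : A.det = 1) :
    adjugate A = Aᵀ := by
  calc adjugate A = adjugate A * A * Aᵀ := by rw [Matrix.mul_assoc, hA, Matrix.mul_one]
    _ = Aᵀ := by rw [adjugate_mul, hdet, one_smul, Matrix.one_mul]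

theorem IsSO3.four_mul_psi_dotProduct_self {R : Matrix (Fin 3) (Fin 3) ℝ} (hR : IsSO3 R) :
    4 * (psi R ⬝ᵥ psi R) = 3 - trace R ^ 2 + 2 * trace R := by
  rw [_root_.four_mul_psi_dotProduct_self, trace_mul_self_fin_three, hR.1,
    adjugate_eq_transpose_of_mul_transpose_eq_one hR.1 hR.2, trace_transpose, trace_one]
  push_cast [Fintype.card_fin]
  ring

/-- `‖ψ(R)‖² = 4|R|_I²(1 - |R|_I²)`, hence `‖ψ(R)‖ ≤ 2|R|_I`. -/
theorem stmt4 (R : Matrix (Fin 3) (Fin 3) ℝ) (hR : IsSO3 R) :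
    psi R ⬝ᵥ psi R = 4 * distI2 R * (1 - distI2 R) ∧
    vnorm (psi R) ≤ 2 * Real.sqrt (distI2 R) := by
  have hdist : distI2 R = (3 - trace R) / 4 := by
    rw [distI2, trace_sub, trace_one]
    norm_num
    ring
  have key : psi R ⬝ᵥ psi R = 4 * distI2 R * (1 - distI2 R) := by
    rw [hdist]
    linear_combination hR.four_mul_psi_dotProduct_self / 4
  refine ⟨key, ?_⟩
  calc vnorm (psi R) ≤ Real.sqrt (2 ^ 2 * distI2 R) :=
        Real.sqrt_le_sqrt (by nlinarith [sq_nonneg (distI2 R)])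
    _ = 2 * Real.sqrt (distI2 R) := by
        rw [Real.sqrt_mul (by norm_num), Real.sqrt_sq zero_le_two]
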